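/- arXiv:2010.01655 — 8 statements merged into one kernel-verified Lean document; each statement's English description precedes it below -/
import Mathlib

section
/- If (a_n) is a nondecreasing sequence of positive integers that is complete (every positive integer is a sum of distinct terms), then a_1 = 1 and a_{n+1} ≤ 1 + a_1 + ... + a_n for all n ≥ 1. -/
/-- A sequence of positive integers (indexed from 1) is complete if every positive
integer is a sum of distinct terms (each index used at most once). -/
def SeqComplete (a : ℕ → ℕ) : Prop :=
  ∀ N : ℕ, 0 < N → ∃ s : Finset ℕ, (∀ i ∈ s, 1 ≤ i) ∧ ∑ i ∈ s, a i = N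

/-- `H` is the positive linear recurrence sequence (PLRS) with coefficients
`c 1, …, c L` (indexed from 1). -/
def IsPLRS (L : ℕ) (c : ℕ → ℕ) (H : ℕ → ℕ) : Prop :=
  H 1 = 1 ∧
  (∀ n, 1 ≤ n → n < L → H (n + 1) = (∑ i ∈ Finset.Icc 1 n, c i * H (n + 1 - i)) + 1) ∧
  (∀ n, L ≤ n → H (n + 1) = ∑ i ∈ Finset.Icc 1 L, c i * H (n + 1 - i))

/-! If `a (n + 1) > 1 + a 1 + ⋯ + a n`, then by monotonicity a representation of
`N = 1 + a 1 + ⋯ + a n` can only use the terms `a 1, …, a n`, whose total falls short of `N`.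
For `n = 0` this is the statement `a 1 ≤ 1`. -/

open Finset

theorem Finset.subset_Icc_of_sum_lt {a : ℕ → ℕ} (hmono : MonotoneOn a (Set.Ici 1))
    {s : Finset ℕ} (hs : ∀ i ∈ s, 1 ≤ i) {n : ℕ} (hsum : ∑ i ∈ s, a i < a (n + 1)) :
    s ⊆ Icc 1 n := by
  intro j hj
  refine mem_Icc.2 ⟨hs j hj, ?_⟩
  by_contra! hnj
  have hle : a (n + 1) ≤ a j := hmono (Set.mem_Ici.2 (by omega)) (Set.mem_Ici.2 (hs j hj)) hnj
  have hterm : a j ≤ ∑ i ∈ s, a i := single_le_sum (fun i _ ↦ Nat.zero_le (a i)) hj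
  omega

theorem SeqComplete.le_one_add_sum_Icc {a : ℕ → ℕ} (hcomp : SeqComplete a)
    (hmono : MonotoneOn a (Set.Ici 1)) (n : ℕ) :
    a (n + 1) ≤ 1 + ∑ i ∈ Icc 1 n, a i := by
  by_contra! hgap
  obtain ⟨s, hs, hsum⟩ := hcomp (1 + ∑ i ∈ Icc 1 n, a i) (by omega)
  have hsub : s ⊆ Icc 1 n := subset_Icc_of_sum_lt hmono hs (by omega)
  have := sum_le_sum_of_subset hsub (f := a)
  omega

theorem brown_necessity (a : ℕ → ℕ)
    (hpos : ∀ n, 1 ≤ n → 0 < a n)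
    (hmono : ∀ n, 1 ≤ n → a n ≤ a (n + 1))
    (hcomp : SeqComplete a) :
    a 1 = 1 ∧ ∀ n, 1 ≤ n → a (n + 1) ≤ 1 + ∑ i ∈ Finset.Icc 1 n, a i := by
  have hmono' : MonotoneOn a (Set.Ici 1) := monotoneOn_nat_Ici_of_le_succ hmono
  refine ⟨le_antisymm ?_ (hpos 1 le_rfl), fun n _ ↦ hcomp.le_one_add_sum_Icc hmono' n⟩
  simpa using hcomp.le_one_add_sum_Icc hmono' 0
end

section
/- If (a_n) is a nondecreasing sequence of positive integers with a_1 = 1 and a_n ≤ 2·a_{n-1} for all n ≥ 2, then (a_n) is complete, i.e., every positive integer is a sum of distinct terms of the sequence. -/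
/-!
Doubling implies Brown's criterion `a (n + 1) ≤ a 1 + ⋯ + a n + 1`: inductively,
`a (n + 2) ≤ 2 a (n + 1) ≤ (a 1 + ⋯ + a n + 1) + a (n + 1)`. Under Brown's criterion every
`N ≤ a 1 + ⋯ + a n` is a sum of distinct terms among `a 1, …, a n`, greedily: if `N` exceeds
`a 1 + ⋯ + a (n - 1)`, then `0 ≤ N - a n ≤ a 1 + ⋯ + a (n - 1)`. Positivity makes these partial
sums unbounded.
-/

open Finset

variable {a : ℕ → ℕ}

theorem le_sum_Icc_add_one_of_le_two_mul (h1 : a 1 = 1)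
    (hdouble : ∀ n, 2 ≤ n → a n ≤ 2 * a (n - 1)) (n : ℕ) :
    a (n + 1) ≤ ∑ i ∈ Icc 1 n, a i + 1 := by
  induction n with
  | zero => simp [h1]
  | succ k ih =>
    have htwice : a (k + 1 + 1) ≤ 2 * a (k + 1) := hdouble (k + 2) (by omega)
    rw [sum_Icc_succ_top (by omega)]
    omega

theorem exists_subset_Icc_sum_eq_of_le_sum_Icc
    (hbrown : ∀ n, a (n + 1) ≤ ∑ i ∈ Icc 1 n, a i + 1) (n : ℕ) :
    ∀ N ≤ ∑ i ∈ Icc 1 n, a i, ∃ s ⊆ Icc 1 n, ∑ i ∈ s, a i = N := by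
  induction n with
  | zero => intro N hN; exact ⟨∅, by simp_all⟩
  | succ k ih =>
    intro N hN
    rw [sum_Icc_succ_top (by omega)] at hN
    have hsub : Icc 1 k ⊆ Icc 1 (k + 1) := Icc_subset_Icc_right (by omega)
    by_cases hsmall : N ≤ ∑ i ∈ Icc 1 k, a i
    · obtain ⟨s, hs, hsum⟩ := ih N hsmall
      exact ⟨s, hs.trans hsub, hsum⟩
    · have hle : a (k + 1) ≤ N := by have := hbrown k; omega
      obtain ⟨s, hs, hsum⟩ := ih (N - a (k + 1)) (by omega)
      have hnot : k + 1 ∉ s := fun h => by simpa using hs h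
      refine ⟨insert (k + 1) s, insert_subset (by simp) (hs.trans hsub), ?_⟩
      rw [sum_insert hnot, hsum]
      omega

theorem doubling_criterion_general (a : ℕ → ℕ)
    (hpos : ∀ n, 1 ≤ n → 0 < a n)
    (h1 : a 1 = 1)
    (hdouble : ∀ n, 2 ≤ n → a n ≤ 2 * a (n - 1)) :
    SeqComplete a := by
  intro N _
  have hN : N ≤ ∑ i ∈ Icc 1 N, a i := by
    calc N = ∑ _i ∈ Icc 1 N, 1 := by simp
      _ ≤ ∑ i ∈ Icc 1 N, a i := sum_le_sum fun i hi => hpos i (mem_Icc.mp hi).1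
  obtain ⟨s, hs, hsum⟩ := exists_subset_Icc_sum_eq_of_le_sum_Icc
    (le_sum_Icc_add_one_of_le_two_mul h1 hdouble) N N hN
  exact ⟨s, fun i hi => (mem_Icc.mp (hs hi)).1, hsum⟩

theorem doubling_criterion (a : ℕ → ℕ)
    (hpos : ∀ n, 1 ≤ n → 0 < a n)
    (hmono : ∀ n, 1 ≤ n → a n ≤ a (n + 1))
    (h1 : a 1 = 1)
    (hdouble : ∀ n, 2 ≤ n → a n ≤ 2 * a (n - 1)) :
    SeqComplete a :=
  doubling_criterion_general a hpos h1 hdouble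
end

section
/- Let (H_n) be the PLRS with all-positive coefficients [c_1,...,c_L] (each c_i ≥ 1). Then (H_n) is complete if and only if c_1 = c_2 = ... = c_{L-1} = 1 and c_L ∈ {1, 2}. -/
/-!
By Brown's criterion, a monotone sequence of positive integers is complete exactly when each
term exceeds the sum of all earlier terms by at most one. For a PLRS whose coefficients are all
positive this forces the coefficients: if `c 1 = ⋯ = c (j-1) = 1`, the recurrence gives
`H (j+1) = H 1 + ⋯ + H j + c j - 1 + [j < L]`, so Brown's inequality at `j` reads
`c j = 1` for `j < L` and `c L ≤ 2`. Conversely, for such coefficients and `n ≥ L`,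
`H (n+1)` is the sum of the `L - 1` preceding terms and `c L ≤ 2` copies of `H (n+1-L)`;
bounding one copy by Brown's inequality for `H (n+1-L)` gives Brown's inequality for `H (n+1)`.
-/

open Finset

theorem Finset.sum_Icc_one_add_sum_Icc {M : Type*} [AddCommMonoid M] (f : ℕ → M) {m n : ℕ}
    (hmn : m ≤ n) : ∑ i ∈ Icc 1 m, f i + ∑ i ∈ Icc (m + 1) n, f i = ∑ i ∈ Icc 1 n, f i := by
  simpa only [← Icc_add_one_left_eq_Ioc, zero_add] using
    sum_Ioc_consecutive f (Nat.zero_le m) hmn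

theorem sum_Icc_mul_sub_eq_of_eq_one {c f : ℕ → ℕ} {k n : ℕ} (hk : 1 ≤ k) (hkn : k ≤ n)
    (hone : ∀ i, 1 ≤ i → i < k → c i = 1) :
    ∑ i ∈ Icc 1 k, c i * f (n + 1 - i) = ∑ j ∈ Icc (n + 2 - k) n, f j + c k * f (n + 1 - k) := by
  obtain ⟨k, rfl⟩ : ∃ k', k = k' + 1 := ⟨k - 1, by omega⟩
  rw [sum_Icc_succ_top (by omega)]
  congr 1
  calc ∑ i ∈ Icc 1 k, c i * f (n + 1 - i) = ∑ i ∈ Icc 1 k, f (n + 1 - i) :=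
        sum_congr rfl fun i hi => by rw [hone i (mem_Icc.1 hi).1 (Nat.lt_succ_of_le (mem_Icc.1 hi).2), one_mul]
    _ = ∑ j ∈ Icc (n + 2 - (k + 1)) n, f j := by
        refine sum_nbij' (fun i => n + 1 - i) (fun j => n + 1 - j) ?_ ?_ ?_ ?_ ?_ <;>
          intro i hi <;> simp only [mem_Icc] at hi ⊢ <;> omega

def BrownCondition (a : ℕ → ℕ) : Prop :=
  ∀ n, a (n + 1) ≤ 1 + ∑ i ∈ Icc 1 n, a i

section BrownCriterion

variable {a : ℕ → ℕ}

theorem BrownCondition.exists_subset_Icc_sum_eq (hb : BrownCondition a) (n : ℕ) :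
    ∀ N, N ≤ ∑ i ∈ Icc 1 n, a i → ∃ s ⊆ Icc 1 n, ∑ i ∈ s, a i = N := by
  induction n with
  | zero => intro N hN; exact ⟨∅, empty_subset _, by simp_all⟩
  | succ n ih =>
    intro N hN
    rw [sum_Icc_succ_top (by omega)] at hN
    have hsub : Icc 1 n ⊆ Icc 1 (n + 1) := Icc_subset_Icc_right n.le_succ
    by_cases hle : N ≤ ∑ i ∈ Icc 1 n, a i
    · obtain ⟨s, hs, hsum⟩ := ih N hle
      exact ⟨s, hs.trans hsub, hsum⟩
    · -- greedy step: `N` exceeds the earlier terms, hence `a (n + 1) ≤ N` by Brown's condition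
      obtain ⟨t, ht, htsum⟩ := ih (N - a (n + 1)) (by omega)
      have hnt : n + 1 ∉ t := fun hmem => by simpa using ht hmem
      refine ⟨insert (n + 1) t, insert_subset (by simp) (ht.trans hsub), ?_⟩
      have := hb n
      rw [sum_insert hnt, htsum]
      omega

theorem BrownCondition.seqComplete (hb : BrownCondition a) (hpos : ∀ n, 1 ≤ n → 0 < a n) :
    SeqComplete a := by
  intro N _
  have hN : N ≤ ∑ i ∈ Icc 1 N, a i := by
    simpa using card_nsmul_le_sum (Icc 1 N) a 1 fun i hi => hpos i (mem_Icc.1 hi).1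
  obtain ⟨s, hs, hsum⟩ := hb.exists_subset_Icc_sum_eq N N hN
  exact ⟨s, fun i hi => (mem_Icc.1 (hs hi)).1, hsum⟩

theorem SeqComplete.brownCondition (hcomp : SeqComplete a) (hmono : MonotoneOn a (Set.Ici 1)) :
    BrownCondition a := by
  intro n
  by_contra! hgap
  obtain ⟨s, hs, hsum⟩ := hcomp (∑ i ∈ Icc 1 n, a i + 1) (by omega)
  by_cases hsub : s ⊆ Icc 1 n
  · have := sum_le_sum_of_subset (f := a) hsub
    omega
  · obtain ⟨m, hms, hmn⟩ := not_subset.1 hsub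
    have hm : n + 1 ≤ m := by have := hs m hms; simp only [mem_Icc] at hmn; omega
    have := single_le_sum (fun i _ => Nat.zero_le (a i)) hms
    have := hmono (Set.mem_Ici.2 (by omega : 1 ≤ n + 1)) (Set.mem_Ici.2 (hs m hms)) hm
    omega

theorem seqComplete_iff_brownCondition (hmono : MonotoneOn a (Set.Ici 1))
    (hpos : ∀ n, 1 ≤ n → 0 < a n) : SeqComplete a ↔ BrownCondition a :=
  ⟨fun hcomp => hcomp.brownCondition hmono, fun hb => hb.seqComplete hpos⟩

end BrownCriterion

namespace IsPLRS

variable {L : ℕ} {c H : ℕ → ℕ}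

theorem le_apply_succ (h : IsPLRS L c H) (hL : 1 ≤ L) (hc1 : 1 ≤ c 1) {n : ℕ} (hn : 1 ≤ n) :
    H n ≤ H (n + 1) := by
  have hterm : ∀ k, 1 ≤ k → H n ≤ ∑ i ∈ Icc 1 k, c i * H (n + 1 - i) := fun k hk =>
    calc H n ≤ c 1 * H (n + 1 - 1) := by simpa using Nat.le_mul_of_pos_left (H n) hc1
      _ ≤ _ := single_le_sum (f := fun i => c i * H (n + 1 - i)) (fun _ _ => Nat.zero_le _)
        (by simp [hk])
  rcases lt_or_ge n L with hnL | hLn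
  · rw [h.2.1 n hn hnL]
    exact (hterm n hn).trans (Nat.le_succ _)
  · rw [h.2.2 n hLn]
    exact hterm L hL

theorem monotoneOn (h : IsPLRS L c H) (hL : 1 ≤ L) (hc1 : 1 ≤ c 1) : MonotoneOn H (Set.Ici 1) :=
  monotoneOn_of_le_add_one Set.ordConnected_Ici fun _ _ hn _ => h.le_apply_succ hL hc1 hn

theorem pos (h : IsPLRS L c H) (hL : 1 ≤ L) (hc1 : 1 ≤ c 1) {n : ℕ} (hn : 1 ≤ n) : 0 < H n :=
  calc 0 < H 1 := by rw [h.1]; exact Nat.one_pos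
    _ ≤ H n := h.monotoneOn hL hc1 (Set.mem_Ici.2 le_rfl) (Set.mem_Ici.2 hn) hn

theorem apply_succ_of_lt (h : IsPLRS L c H) {j : ℕ} (hj : 1 ≤ j) (hjL : j < L)
    (hone : ∀ i, 1 ≤ i → i < j → c i = 1) : H (j + 1) = ∑ i ∈ Icc 1 j, H i + c j := by
  have hsplit := sum_Icc_one_add_sum_Icc H hj
  rw [h.2.1 j hj hjL, sum_Icc_mul_sub_eq_of_eq_one hj le_rfl hone, show j + 2 - j = 1 + 1 by omega,
    show j + 1 - j = 1 by omega, h.1, ← hsplit, Icc_self, sum_singleton, h.1]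
  ring

theorem apply_succ_of_length_le (h : IsPLRS L c H) (hL : 1 ≤ L)
    (hone : ∀ i, 1 ≤ i → i < L → c i = 1) {n : ℕ} (hLn : L ≤ n) :
    H (n + 1) = ∑ j ∈ Icc (n + 2 - L) n, H j + c L * H (n + 1 - L) := by
  rw [h.2.2 n hLn, sum_Icc_mul_sub_eq_of_eq_one hL hLn hone]

theorem apply_length_succ (h : IsPLRS L c H) (hL : 1 ≤ L)
    (hone : ∀ i, 1 ≤ i → i < L → c i = 1) : H (L + 1) + 1 = ∑ i ∈ Icc 1 L, H i + c L := by
  have hsplit := sum_Icc_one_add_sum_Icc H hL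
  rw [h.apply_succ_of_length_le hL hone le_rfl, show L + 2 - L = 1 + 1 by omega,
    show L + 1 - L = 1 by omega, ← hsplit, Icc_self, sum_singleton, h.1]
  ring

theorem brownCondition (h : IsPLRS L c H) (hL : 1 ≤ L) (hone : ∀ i, 1 ≤ i → i < L → c i = 1)
    (hcL : c L ≤ 2) : BrownCondition H := by
  intro n
  induction n using Nat.strong_induction_on with
  | _ n ih =>
  rcases Nat.eq_zero_or_pos n with rfl | hn
  · simp [h.1]
  rcases lt_or_ge n L with hnL | hLn
  · rw [h.apply_succ_of_lt hn hnL fun i hi hin => hone i hi (hin.trans hnL), hone n hn hnL]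
    omega
  · obtain ⟨m, hm⟩ : ∃ m, n + 1 - L = m + 1 := ⟨n - L, by omega⟩
    have hsplit := sum_Icc_one_add_sum_Icc H (show m + 1 ≤ n by omega)
    rw [sum_Icc_succ_top (by omega)] at hsplit
    have hIH := ih m (by omega)
    have hcoeff : c L * H (m + 1) ≤ 2 * H (m + 1) := Nat.mul_le_mul_right _ hcL
    rw [h.apply_succ_of_length_le hL hone hLn, hm, show n + 2 - L = m + 1 + 1 by omega]
    omega

theorem coeff_eq_one_of_brownCondition (h : IsPLRS L c H) (hc : ∀ i, 1 ≤ i → i ≤ L → 1 ≤ c i)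
    (hb : BrownCondition H) : ∀ i, 1 ≤ i → i < L → c i = 1 := by
  suffices ∀ j, j < L → ∀ i, 1 ≤ i → i ≤ j → c i = 1 from fun i hi hiL => this i hiL i hi le_rfl
  intro j
  induction j with
  | zero => intro _ i hi hi0; omega
  | succ j ih =>
    intro hjL i hi hij
    have hprev := ih (by omega)
    rcases Nat.lt_or_ge i (j + 1) with hlt | hge
    · exact hprev i hi (by omega)
    · obtain rfl : i = j + 1 := by omega
      have := h.apply_succ_of_lt hi hjL fun k hk hkj => hprev k hk (by omega)
      have := hb (j + 1)
      have := hc (j + 1) hi hjL.le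
      omega

theorem coeff_length_le_two_of_brownCondition (h : IsPLRS L c H) (hL : 1 ≤ L)
    (hone : ∀ i, 1 ≤ i → i < L → c i = 1) (hb : BrownCondition H) : c L ≤ 2 := by
  have := h.apply_length_succ hL hone
  have := hb L
  omega

end IsPLRS

theorem plrs_positive_coeffs_complete_iff (L : ℕ) (hL : 1 ≤ L) (c : ℕ → ℕ)
    (hc : ∀ i, 1 ≤ i → i ≤ L → 1 ≤ c i) (H : ℕ → ℕ) (h : IsPLRS L c H) :
    SeqComplete H ↔ (∀ i, 1 ≤ i → i < L → c i = 1) ∧ (c L = 1 ∨ c L = 2) := by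
  have hc1 : 1 ≤ c 1 := hc 1 le_rfl hL
  rw [seqComplete_iff_brownCondition (h.monotoneOn hL hc1) fun _ hn => h.pos hL hc1 hn]
  constructor
  · intro hb
    have hone := h.coeff_eq_one_of_brownCondition hc hb
    have hcL := h.coeff_length_le_two_of_brownCondition hL hone hb
    have := hc L hL le_rfl
    exact ⟨hone, by omega⟩
  · rintro ⟨hone, hcL⟩
    exact h.brownCondition hL hone (by omega)
end

section
/- For k ≥ 0 and N ≥ 1, the PLRS generated by [1, 0,...,0, N] with k zeros (so length L = k+2) is complete if and only if N ≤ ⌈(k+2)(k+3)/4⌉. -/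
/-!
Let `g n = 1 + (H 1 + ⋯ + H n) - H (n + 1)` be the slack in Brown's criterion, so that completeness
means `g ≥ 0`. Summing the recurrence gives `H (k + 2 + j) = k + 2 + N (H 1 + ⋯ + H j)`, and from it
`g (k + 2 + j) = g (k + 1 + j) + N g j + (k + 2 - N)`, while `g n = n (n - 1) / 2` for `n ≤ k + 1`.
An increment can only be negative when the delayed term `g j` vanishes, i.e. for `j = 0, 1` and
possibly `j = k + 2, k + 3`. The first two bring `g` down to
`g (k + 3) = ((k + 2) (k + 3) + 2 - 4 N) / 2`, and before the last two act the term `N g (k + 1)`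
has already compensated for them. So `H` is complete iff `g (k + 3) ≥ 0`, which is the bound on `N`.
-/

open Finset

def partialSum (a : ℕ → ℕ) (n : ℕ) : ℕ := ∑ i ∈ Icc 1 n, a i

theorem partialSum_zero (a : ℕ → ℕ) : partialSum a 0 = 0 := by simp [partialSum]

theorem partialSum_succ (a : ℕ → ℕ) (n : ℕ) :
    partialSum a (n + 1) = partialSum a n + a (n + 1) :=
  sum_Icc_succ_top (by omega) a

def brownGap (H : ℕ → ℕ) (n : ℕ) : ℤ := 1 + (partialSum H n : ℤ) - H (n + 1)

theorem brownGap_nonneg_iff (H : ℕ → ℕ) (n : ℕ) :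
    0 ≤ brownGap H n ↔ H (n + 1) ≤ 1 + partialSum H n := by
  unfold brownGap
  omega

section Brown

variable {a : ℕ → ℕ}

theorem exists_subset_sum_eq_of_le_partialSum (h : ∀ n, a (n + 1) ≤ 1 + partialSum a n) :
    ∀ n m, m ≤ partialSum a n → ∃ s ⊆ Icc 1 n, ∑ i ∈ s, a i = m := by
  intro n
  induction n with
  | zero =>
    intro m hm
    exact ⟨∅, empty_subset _, by simp only [partialSum_zero] at hm; simp; omega⟩
  | succ n ih =>
    intro m hm
    rw [partialSum_succ] at hm
    have hsub : Icc 1 n ⊆ Icc 1 (n + 1) := Icc_subset_Icc_right n.le_succ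
    by_cases hle : m ≤ partialSum a n
    · obtain ⟨s, hs, rfl⟩ := ih m hle
      exact ⟨s, hs.trans hsub, rfl⟩
    · have hn := h n
      obtain ⟨s, hs, hsum⟩ := ih (m - a (n + 1)) (by omega)
      have hnot : n + 1 ∉ s := fun hmem => by simpa using hs hmem
      refine ⟨insert (n + 1) s, insert_subset (by simp) (hs.trans hsub), ?_⟩
      rw [sum_insert hnot, hsum]
      omega

theorem seqComplete_iff_le_one_add_partialSum (h1 : 1 ≤ a 1)
    (hmono : Monotone fun n => a (n + 1)) :
    SeqComplete a ↔ ∀ n, a (n + 1) ≤ 1 + partialSum a n := by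
  constructor
  · intro hc n
    obtain ⟨s, hs1, hs⟩ := hc (partialSum a n + 1) (by omega)
    by_contra! hlt
    have hsub : s ⊆ Icc 1 n := by
      intro i hi
      refine mem_Icc.mpr ⟨hs1 i hi, ?_⟩
      by_contra! hni
      obtain ⟨j, rfl⟩ : ∃ j, i = j + 1 := ⟨i - 1, by omega⟩
      have hle : a (n + 1) ≤ a (j + 1) := hmono (show n ≤ j by omega)
      have := single_le_sum (f := a) (fun _ _ => Nat.zero_le _) hi
      omega
    have hsum := sum_le_sum_of_subset (f := a) hsub
    rw [hs] at hsum
    exact Nat.not_succ_le_self _ hsum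
  · intro h M hM
    have hpos : ∀ i ∈ Icc 1 M, 1 ≤ a i := fun i hi => by
      obtain ⟨j, rfl⟩ : ∃ j, i = j + 1 := ⟨i - 1, by grind⟩
      exact h1.trans (hmono j.zero_le)
    have hM : M ≤ partialSum a M := by
      simpa [partialSum] using card_nsmul_le_sum (Icc 1 M) a 1 hpos
    obtain ⟨s, hs, hsum⟩ := exists_subset_sum_eq_of_le_partialSum h M M hM
    exact ⟨s, fun i hi => (mem_Icc.mp (hs hi)).1, hsum⟩

end Brown

theorem nonneg_and_one_le_of_two_mul_eq {m : ℤ} {n : ℕ} (h : 2 * m = n * (n - 1)) :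
    0 ≤ m ∧ (2 ≤ n → 1 ≤ m) := by
  rcases n with _ | n
  · simp_all
  · push_cast at h
    exact ⟨by nlinarith, fun hn => by nlinarith [(by exact_mod_cast hn : (2 : ℤ) ≤ n + 1)]⟩

section DelayedRecurrence

variable {k N : ℕ} {g : ℕ → ℤ} (hinit : ∀ n, n ≤ k + 1 → 2 * g n = n * (n - 1))
  (hrec : ∀ j, g (k + 2 + j) = g (k + 1 + j) + N * g j + (k + 2 - N))
include hinit hrec

theorem nonneg_of_delayedRecurrence_of_le (hN : N ≤ k + 2) (n : ℕ) : 0 ≤ g n := by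
  induction n using Nat.strong_induction_on with
  | _ n ih =>
  rcases le_or_gt n (k + 1) with hn | hn
  · exact (nonneg_and_one_le_of_two_mul_eq (hinit n hn)).1
  · obtain ⟨j, rfl⟩ : ∃ j, n = k + 2 + j := ⟨n - (k + 2), by omega⟩
    rw [hrec j]
    have := ih (k + 1 + j) (by omega)
    have := ih j (by omega)
    have : (0 : ℤ) ≤ k + 2 - N := by omega
    positivity

theorem nonneg_of_delayedRecurrence_of_lt (hN : k + 2 < N) (h : 0 ≤ g (k + 3)) (n : ℕ) :
    0 ≤ g n ∧ (k + 4 ≤ n → 1 ≤ g n) := by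
  have h0 := hinit 0 (by omega)
  have h1 := hinit 1 (by omega)
  have hk1 := hinit (k + 1) le_rfl
  have hk2 := hrec 0
  have hk3 := hrec 1
  simp only [add_zero] at hk2
  push_cast at hk1 h0 h1 hk3
  have hk : 2 ≤ k := by nlinarith
  have step (j : ℕ) (hj : 1 ≤ g j) (hprev : 0 ≤ g (k + 1 + j)) : 1 ≤ g (k + 2 + j) := by
    rw [hrec j]; nlinarith
  induction n using Nat.strong_induction_on with
  | _ n ih =>
  rcases le_or_gt n (k + 1) with hn | hn
  · exact ⟨(nonneg_and_one_le_of_two_mul_eq (hinit n hn)).1, by omega⟩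
  obtain ⟨j, rfl⟩ : ∃ j, n = k + 2 + j := ⟨n - (k + 2), by omega⟩
  rcases Nat.lt_or_ge j 2 with hj | hj
  · interval_cases j
    · exact ⟨by nlinarith, by omega⟩
    · exact ⟨h, by omega⟩
  have hprev := (ih (k + 1 + j) (by omega)).1
  by_cases hjk : j ≤ k + 1 ∨ k + 4 ≤ j
  · have hgj : 1 ≤ g j := by
      rcases hjk with hjk | hjk
      · exact (nonneg_and_one_le_of_two_mul_eq (hinit j hjk)).2 hj
      · exact (ih j (by omega)).2 hjk
    exact ⟨by linarith [step j hgj hprev], fun _ => step j hgj hprev⟩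
  -- Here `j = k + 2` or `k + 3`, where `g j` may vanish; the earlier step through `j = k + 1`
  -- gained `N g (k + 1) ≥ 3 N`, which covers the two losses of `N - (k + 2)`.
  have hN0 : (0 : ℤ) ≤ N := by positivity
  have hrec1 := hrec (k + 1)
  have hrec2 := hrec (k + 2)
  have hrec3 := hrec (k + 3)
  have hg := (ih (k + 1 + (k + 1)) (by omega)).1
  have hgain := mul_le_mul_of_nonneg_left (show (3 : ℤ) ≤ g (k + 1) by nlinarith) hN0
  have hloss2 := mul_nonneg hN0 (ih (k + 2) (by omega)).1
  have hloss3 := mul_nonneg hN0 h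
  have hlow : 3 ≤ g (k + 2 + j) := by
    rcases (show j = k + 2 ∨ j = k + 3 by omega) with rfl | rfl
    · ring_nf at hrec1 hrec2 hg hgain hloss2 ⊢
      linarith
    · ring_nf at hrec1 hrec2 hrec3 hg hgain hloss2 hloss3 ⊢
      linarith
  exact ⟨by linarith, fun _ => by linarith⟩

theorem nonneg_of_delayedRecurrence (h : 0 ≤ g (k + 3)) (n : ℕ) : 0 ≤ g n := by
  rcases le_or_gt N (k + 2) with hN | hN
  · exact nonneg_of_delayedRecurrence_of_le hinit hrec hN n
  · exact (nonneg_of_delayedRecurrence_of_lt hinit hrec hN h n).1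

end DelayedRecurrence

def coeffOneZerosN (k N : ℕ) (i : ℕ) : ℕ := if i = 1 then 1 else if i = k + 2 then N else 0

namespace IsPLRS

variable {k N : ℕ} {H : ℕ → ℕ} (h : IsPLRS (k + 2) (coeffOneZerosN k N) H)
include h

theorem eq_self_of_le : ∀ n, 1 ≤ n → n ≤ k + 2 → H n = n := by
  intro n
  induction n with
  | zero => omega
  | succ n ih =>
    intro _ hn
    rcases Nat.eq_zero_or_pos n with rfl | hpos
    · exact h.1
    have hsum : ∑ i ∈ Icc 1 n, coeffOneZerosN k N i * H (n + 1 - i) = H n := by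
      rw [sum_eq_single_of_mem 1 (mem_Icc.mpr ⟨le_rfl, hpos⟩)]
      · simp [coeffOneZerosN]
      · intro i hi hi1
        simp only [mem_Icc] at hi
        simp [coeffOneZerosN, hi1, show i ≠ k + 2 by omega]
    rw [h.2.1 n hpos (by omega), hsum, ih hpos (by omega)]

theorem succ_eq : ∀ n, k + 2 ≤ n → H (n + 1) = H n + N * H (n - (k + 1)) := by
  intro n hn
  rw [h.2.2 n hn, sum_eq_add_of_mem 1 (k + 2) (by simp) (by simp) (by omega)]
  · simp [coeffOneZerosN, show n + 1 - (k + 2) = n - (k + 1) by omega]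
  · intro i hi hne
    simp [coeffOneZerosN, hne.1, hne.2]

theorem monotone_succ : Monotone fun n => H (n + 1) := by
  refine monotone_nat_of_le_succ fun n => ?_
  rcases le_or_gt (n + 2) (k + 2) with hle | hgt
  · rw [h.eq_self_of_le n.succ (by omega) (by omega), h.eq_self_of_le (n + 2) (by omega) hle]
    omega
  · rw [h.succ_eq (n + 1) (by omega)]
    omega

theorem two_mul_partialSum : ∀ n, n ≤ k + 2 → 2 * partialSum H n = n * (n + 1) := by
  intro n
  induction n with
  | zero => simp [partialSum_zero]
  | succ n ih =>
    intro hn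
    rw [partialSum_succ, mul_add, ih (by omega), h.eq_self_of_le (n + 1) (by omega) hn]
    ring

theorem add_eq_add_mul_partialSum (j : ℕ) : H (k + 2 + j) = k + 2 + N * partialSum H j := by
  induction j with
  | zero => simp [partialSum_zero, h.eq_self_of_le (k + 2) (by omega) le_rfl]
  | succ j ih =>
    rw [← add_assoc, h.succ_eq (k + 2 + j) (by omega), ih, partialSum_succ,
      show k + 2 + j - (k + 1) = j + 1 by omega]
    ring

theorem two_mul_brownGap : ∀ n, n ≤ k + 1 → 2 * brownGap H n = n * (n - 1) := by
  intro n hn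
  have hS : (2 * partialSum H n : ℤ) = n * (n + 1) := by
    exact_mod_cast h.two_mul_partialSum n (by omega)
  rw [brownGap, h.eq_self_of_le (n + 1) (by omega) (by omega)]
  push_cast
  linear_combination hS

theorem brownGap_add (j : ℕ) :
    brownGap H (k + 2 + j) = brownGap H (k + 1 + j) + N * brownGap H j + (k + 2 - N) := by
  have hS := partialSum_succ H (k + 1 + j)
  have hH := h.succ_eq (k + 2 + j) (by omega)
  have hclosed := h.add_eq_add_mul_partialSum j
  rw [show k + 2 + j - (k + 1) = j + 1 by omega] at hH
  rw [show k + 1 + j + 1 = k + 2 + j by omega] at hS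
  simp only [brownGap, show k + 1 + j + 1 = k + 2 + j by omega, hS, hH, hclosed]
  push_cast
  ring

theorem brownGap_add_three_nonneg_iff : 0 ≤ brownGap H (k + 3) ↔ N ≤ ((k + 2) * (k + 3) + 3) / 4 := by
  have h0 := h.two_mul_brownGap 0 (by omega)
  have h1 := h.two_mul_brownGap 1 (by omega)
  have hk1 := h.two_mul_brownGap (k + 1) le_rfl
  have hk2 := h.brownGap_add 0
  have hk3 := h.brownGap_add 1
  push_cast at h0 h1 hk1
  have hgap : 2 * brownGap H (k + 3) = (k + 2) * (k + 3) + 2 - 4 * N := by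
    simp only [add_zero] at hk2
    rw [show k + 3 = k + 2 + 1 by ring, hk3, show k + 1 + 1 = k + 2 by ring, hk2]
    linear_combination hk1 + N * h1 + N * h0
  obtain ⟨m, hm⟩ := Nat.even_mul_succ_self (k + 2)
  rw [show k + 2 + 1 = k + 3 by ring] at hm
  have : ((k + 2) * (k + 3) : ℤ) = m + m := by exact_mod_cast hm
  omega

end IsPLRS

theorem one_kzeros_N_complete_iff_general (k N : ℕ) (H : ℕ → ℕ)
    (h : IsPLRS (k + 2) (fun i => if i = 1 then 1 else if i = k + 2 then N else 0) H) :
    SeqComplete H ↔ N ≤ ((k + 2) * (k + 3) + 3) / 4 := by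
  have h : IsPLRS (k + 2) (coeffOneZerosN k N) H := h
  rw [seqComplete_iff_le_one_add_partialSum h.1.ge h.monotone_succ, ← h.brownGap_add_three_nonneg_iff]
  simp only [← brownGap_nonneg_iff]
  exact ⟨fun hB => hB (k + 3),
    nonneg_of_delayedRecurrence h.two_mul_brownGap h.brownGap_add⟩

theorem one_kzeros_N_complete_iff (k N : ℕ) (hN : 1 ≤ N) (H : ℕ → ℕ)
    (h : IsPLRS (k + 2) (fun i => if i = 1 then 1 else if i = k + 2 then N else 0) H) :
    SeqComplete H ↔ N ≤ ((k + 2) * (k + 3) + 3) / 4 :=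
  one_kzeros_N_complete_iff_general k N H h
end

section
/- For k ≥ 1, the PLRS generated by [1,...,1 (k ones), 0, 4] is incomplete; specifically it fails Brown's criterion first at the (2k+3)rd term: H_{2k+3} > 1 + Σ_{i=1}^{2k+2} H_i, while H_{n+1} ≤ 1 + Σ_{i≤n} H_i for all n ≤ 2k+1. -/
open Finset

theorem Finset.sum_Icc_one_add_sum_Ioc {M : Type*} [AddCommMonoid M] (f : ℕ → M) {a n : ℕ}
    (h : a ≤ n) : ∑ i ∈ Icc 1 a, f i + ∑ i ∈ Ioc a n, f i = ∑ i ∈ Icc 1 n, f i :=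
  sum_Ioc_consecutive f (Nat.zero_le a) h

theorem Finset.sum_Icc_one_reflect {M : Type*} [AddCommMonoid M] (f : ℕ → M) {m n : ℕ}
    (h : m ≤ n) : ∑ i ∈ Icc 1 m, f (n + 1 - i) = ∑ j ∈ Ioc (n - m) n, f j := by
  refine sum_nbij' (fun i => n + 1 - i) (fun j => n + 1 - j) ?_ ?_ ?_ ?_ ?_ <;>
    intro x hx <;> simp only [mem_Icc, mem_Ioc] at hx ⊢ <;> omega

theorem not_seqComplete_of_forall_lt {a : ℕ → ℕ} {m N : ℕ} (hN : 0 < N)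
    (hsum : ∑ i ∈ Icc 1 m, a i < N) (hlarge : ∀ j, m < j → N < a j) : ¬ SeqComplete a := by
  intro hcomplete
  obtain ⟨s, hs_pos, hs_sum⟩ := hcomplete N hN
  have hs_sub : s ⊆ Icc 1 m := fun j hj => by
    have hj_le : a j ≤ ∑ i ∈ s, a i := single_le_sum (fun _ _ => Nat.zero_le _) hj
    exact mem_Icc.mpr
      ⟨hs_pos j hj, not_lt.mp fun hmj => (hlarge j hmj).not_ge (hs_sum ▸ hj_le)⟩
  have := sum_le_sum_of_subset (f := a) hs_sub
  omega

def onesZeroFour (k : ℕ) : ℕ → ℕ :=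
  fun i => if i ≤ k then 1 else if i = k + 2 then 4 else 0

theorem sum_Icc_onesZeroFour_mul {k m n : ℕ} {H : ℕ → ℕ} (hm : m ≤ k) (hmn : m ≤ n) :
    ∑ i ∈ Icc 1 m, onesZeroFour k i * H (n + 1 - i) = ∑ j ∈ Ioc (n - m) n, H j := by
  rw [← sum_Icc_one_reflect H hmn]
  refine sum_congr rfl fun i hi => ?_
  rw [onesZeroFour, if_pos (by simp only [mem_Icc] at hi; omega), one_mul]

namespace IsPLRS

variable {k : ℕ} {H : ℕ → ℕ}

theorem apply_succ_of_le (hH : IsPLRS (k + 2) (onesZeroFour k) H) {n : ℕ} (hn : 1 ≤ n)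
    (hnk : n ≤ k) : H (n + 1) = ∑ i ∈ Icc 1 n, H i + 1 := by
  rw [hH.2.1 n hn (by omega), sum_Icc_onesZeroFour_mul hnk le_rfl, Nat.sub_self]
  rfl

theorem sum_Icc_eq_two_pow_sub_one (hH : IsPLRS (k + 2) (onesZeroFour k) H) {n : ℕ}
    (hn : n ≤ k + 1) : ∑ i ∈ Icc 1 n, H i = 2 ^ n - 1 := by
  induction n with
  | zero => simp
  | succ n ih =>
    rw [sum_Icc_succ_top (by omega), ih (by omega)]
    rcases Nat.eq_zero_or_pos n with rfl | hn_pos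
    · simp [hH.1]
    · rw [hH.apply_succ_of_le hn_pos (by omega), ih (by omega), pow_succ]
      have := Nat.one_le_two_pow (n := n)
      omega

theorem apply_eq_two_pow (hH : IsPLRS (k + 2) (onesZeroFour k) H) {j : ℕ} (hj : 1 ≤ j)
    (hjk : j ≤ k + 1) : H j = 2 ^ (j - 1) := by
  obtain ⟨n, rfl⟩ : ∃ n, j = n + 1 := ⟨j - 1, by omega⟩
  rcases Nat.eq_zero_or_pos n with rfl | hn_pos
  · exact hH.1
  · rw [hH.apply_succ_of_le hn_pos (by omega), hH.sum_Icc_eq_two_pow_sub_one (by omega)]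
    have := Nat.one_le_two_pow (n := n)
    simp only [Nat.add_sub_cancel]
    omega

/-- The zero coefficient drops `H 1 = 1` from the sum, cancelling the initial `+ 1`. -/
theorem apply_k_add_two (hH : IsPLRS (k + 2) (onesZeroFour k) H) :
    H (k + 2) = ∑ i ∈ Icc 1 (k + 1), H i := by
  have hrec := hH.2.1 (k + 1) (by omega) (by omega)
  rw [sum_Icc_succ_top (by omega), sum_Icc_onesZeroFour_mul le_rfl (by omega), onesZeroFour,
    if_neg (by omega), if_neg (by omega), Nat.add_sub_cancel_left] at hrec
  rw [hrec, ← sum_Icc_one_add_sum_Ioc H (by omega : 1 ≤ k + 1), Finset.Icc_self, sum_singleton,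
    hH.1]
  ring

theorem apply_succ_of_ge (hH : IsPLRS (k + 2) (onesZeroFour k) H) {n : ℕ} (hn : k + 2 ≤ n) :
    H (n + 1) = ∑ j ∈ Ioc (n - k) n, H j + 4 * H (n - k - 1) := by
  rw [hH.2.2 n hn, sum_Icc_succ_top (by omega), sum_Icc_succ_top (by omega),
    sum_Icc_onesZeroFour_mul le_rfl (by omega), onesZeroFour, onesZeroFour, if_neg (by omega),
    if_neg (by omega), if_neg (by omega), if_pos rfl, show n + 1 - (k + 2) = n - k - 1 by omega]
  ring

theorem apply_succ_add_sum_Icc (hH : IsPLRS (k + 2) (onesZeroFour k) H) {n : ℕ}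
    (hn : k + 2 ≤ n) :
    H (n + 1) + ∑ i ∈ Icc 1 (n - k), H i = ∑ i ∈ Icc 1 n, H i + 4 * H (n - k - 1) := by
  rw [hH.apply_succ_of_ge hn, ← sum_Icc_one_add_sum_Ioc H (by omega : n - k ≤ n)]
  ring

theorem four_mul_apply_eq_two_pow (hH : IsPLRS (k + 2) (onesZeroFour k) H) {j : ℕ} (hj : 2 ≤ j)
    (hjk : j ≤ k + 2) : 4 * H (j - 1) = 2 ^ j := by
  rw [hH.apply_eq_two_pow (by omega) (by omega)]
  calc 4 * 2 ^ (j - 1 - 1) = 2 ^ (j - 1 - 1 + 2) := by ring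
    _ = 2 ^ j := by congr 1; omega

theorem apply_succ_of_ge_of_le (hH : IsPLRS (k + 2) (onesZeroFour k) H) {n : ℕ}
    (hn : k + 2 ≤ n) (hn' : n ≤ 2 * k + 1) : H (n + 1) = ∑ i ∈ Icc 1 n, H i + 1 := by
  have hrec := hH.apply_succ_add_sum_Icc hn
  rw [hH.sum_Icc_eq_two_pow_sub_one (by omega), hH.four_mul_apply_eq_two_pow (by omega)
    (by omega)] at hrec
  have := Nat.one_le_two_pow (n := n - k)
  omega

theorem apply_two_mul_add_three (hH : IsPLRS (k + 2) (onesZeroFour k) H) :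
    H (2 * k + 3) = ∑ i ∈ Icc 1 (2 * k + 2), H i + 2 := by
  have hrec : H (2 * k + 3) + ∑ i ∈ Icc 1 (2 * k + 2 - k), H i =
      ∑ i ∈ Icc 1 (2 * k + 2), H i + 4 * H (2 * k + 2 - k - 1) :=
    hH.apply_succ_add_sum_Icc (by omega)
  have hsum : ∑ i ∈ Icc 1 (k + 2), H i = 2 * (2 ^ (k + 1) - 1) := by
    have hk2 : H (k + 1 + 1) = 2 ^ (k + 1) - 1 :=
      hH.apply_k_add_two.trans (hH.sum_Icc_eq_two_pow_sub_one le_rfl)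
    rw [sum_Icc_succ_top (by omega), hH.sum_Icc_eq_two_pow_sub_one le_rfl, hk2]
    ring
  rw [show 2 * k + 2 - k = k + 2 by omega, hH.four_mul_apply_eq_two_pow (by omega) le_rfl, hsum,
    pow_succ 2 (k + 1)] at hrec
  have := Nat.one_le_two_pow (n := k + 1)
  omega

theorem apply_le_apply_succ (hk : 1 ≤ k) (hH : IsPLRS (k + 2) (onesZeroFour k) H) {n : ℕ}
    (hn : k + 2 ≤ n) : H n ≤ H (n + 1) :=
  calc H n ≤ ∑ j ∈ Ioc (n - k) n, H j :=
        single_le_sum (fun _ _ => Nat.zero_le _) (mem_Ioc.mpr ⟨by omega, le_rfl⟩)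
    _ ≤ H (n + 1) := hH.apply_succ_of_ge hn ▸ Nat.le_add_right _ _

theorem apply_succ_le_one_add_sum_Icc (hH : IsPLRS (k + 2) (onesZeroFour k) H) {n : ℕ}
    (hn : 1 ≤ n) (hn' : n ≤ 2 * k + 1) : H (n + 1) ≤ 1 + ∑ i ∈ Icc 1 n, H i := by
  rcases lt_trichotomy n (k + 1) with hlt | rfl | hgt
  · rw [hH.apply_succ_of_le hn (by omega)]; omega
  · rw [hH.apply_k_add_two]; omega
  · rw [hH.apply_succ_of_ge_of_le (by omega) hn']; omega

end IsPLRS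

theorem k_ones_zero_four_incomplete (k : ℕ) (hk : 1 ≤ k) (H : ℕ → ℕ)
    (h : IsPLRS (k + 2) (fun i => if i ≤ k then 1 else if i = k + 2 then 4 else 0) H) :
    ¬ SeqComplete H ∧
      H (2 * k + 3) > 1 + ∑ i ∈ Finset.Icc 1 (2 * k + 2), H i ∧
      ∀ n, 1 ≤ n → n ≤ 2 * k + 1 → H (n + 1) ≤ 1 + ∑ i ∈ Finset.Icc 1 n, H i := by
  have hH : IsPLRS (k + 2) (onesZeroFour k) H := h
  have hgap := hH.apply_two_mul_add_three
  have hmono : MonotoneOn H {n | k + 2 ≤ n} :=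
    monotoneOn_nat_Ici_of_le_succ fun n hn => hH.apply_le_apply_succ hk hn
  refine ⟨not_seqComplete_of_forall_lt (m := 2 * k + 2)
    (N := 1 + ∑ i ∈ Icc 1 (2 * k + 2), H i) (by omega) (by omega) fun j hj => ?_,
    by omega, fun n hn hn' => hH.apply_succ_le_one_add_sum_Icc hn hn'⟩
  have := hmono (show k + 2 ≤ 2 * k + 3 by omega) (show k + 2 ≤ j by omega) (by omega)
  omega
end

section
/- Fix L ≥ 1 and S ≥ 1. Among all characteristic polynomials x^L − c_1 x^{L-1} − ... − c_L with nonnegative integers c_i, c_1 ≥ 1, c_L ≥ 1, and c_1 + ... + c_L = S + 1, the polynomial x^L − x^{L-1} − S has the smallest positive root. -/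
/-!
Since `c₁ ≥ 1`, the root equation gives `r ^ L ≥ c₁ r ^ (L - 1) ≥ r ^ (L - 1)`, so `r ≥ 1`. Then every
`r ^ (L - i) ≥ 1`, and replacing all of them but `r ^ (L - 1)` by `1`, and `c₁` by `1`, only lowers the
right-hand side: `r ^ L ≥ r ^ (L - 1) + S`. Thus `g(r) ≥ S = g(r₀)` for `g(x) = x ^ (L - 1) (x - 1)`, which is
strictly increasing on `[1, ∞)`.
-/

variable {ι R : Type*} [CommRing R] [LinearOrder R] [IsStrictOrderedRing R]

theorem Finset.add_sum_sub_one_le_sum_mul (s : Finset ι) {c x : ι → R}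
    (hc : ∀ i ∈ s, 0 ≤ c i) (hx : ∀ i ∈ s, 1 ≤ x i) {j : ι} (hj : j ∈ s) (hcj : 1 ≤ c j) :
    x j + ∑ i ∈ s, c i - 1 ≤ ∑ i ∈ s, c i * x i := by
  have hsingle : c j * (x j - 1) ≤ ∑ i ∈ s, c i * (x i - 1) :=
    Finset.single_le_sum (fun i hi => mul_nonneg (hc i hi) (sub_nonneg.2 (hx i hi))) hj
  have hsplit : ∑ i ∈ s, c i * (x i - 1) = ∑ i ∈ s, c i * x i - ∑ i ∈ s, c i := by
    simp only [mul_sub, mul_one, Finset.sum_sub_distrib]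
  have hcj' : 0 ≤ (c j - 1) * (x j - 1) := mul_nonneg (sub_nonneg.2 hcj) (sub_nonneg.2 (hx j hj))
  linarith

theorem strictMonoOn_pow_mul_sub_one (n : ℕ) :
    StrictMonoOn (fun x : R => x ^ n * (x - 1)) (Set.Ici 1) := by
  intro a (ha : 1 ≤ a) b (hb : 1 ≤ b) hab
  calc a ^ n * (a - 1) ≤ b ^ n * (a - 1) :=
        mul_le_mul_of_nonneg_right (pow_le_pow_left₀ (by linarith) hab.le n) (by linarith)
    _ < b ^ n * (b - 1) := mul_lt_mul_of_pos_left (by linarith) (pow_pos (by linarith) n)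

theorem min_principal_root_fixed_sum_general (L S : ℕ) (c : ℕ → ℕ)
    (hc1 : 1 ≤ c 1)
    (hsum : ∑ i ∈ Finset.Icc 1 L, c i = S + 1)
    (r r0 : ℝ) (hr : 0 < r)
    (hroot : r ^ L = ∑ i ∈ Finset.Icc 1 L, (c i : ℝ) * r ^ (L - i))
    (hroot0 : r0 ^ L = r0 ^ (L - 1) + S) :
    r0 ≤ r := by
  have hL : 1 ≤ L := Nat.one_le_iff_ne_zero.2 (by rintro rfl; simp at hsum)
  have hpow_succ : ∀ x : ℝ, x ^ L = x ^ (L - 1) * x := fun x => by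
    rw [← pow_succ, Nat.sub_add_cancel hL]
  have h1 : 1 ∈ Finset.Icc 1 L := Finset.mem_Icc.2 ⟨le_rfl, hL⟩
  have hc1' : (1 : ℝ) ≤ c 1 := by exact_mod_cast hc1
  have hr1 : 1 ≤ r := by
    have hlead : (c 1 : ℝ) * r ^ (L - 1) ≤ r ^ L :=
      hroot ▸ Finset.single_le_sum (f := fun i => (c i : ℝ) * r ^ (L - i))
        (fun i _ => by positivity) h1
    refine le_of_mul_le_mul_left ?_ (pow_pos hr (L - 1))
    calc r ^ (L - 1) * 1 ≤ c 1 * r ^ (L - 1) := by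
          rw [mul_one]; exact le_mul_of_one_le_left (pow_nonneg hr.le _) hc1'
      _ ≤ r ^ (L - 1) * r := hpow_succ r ▸ hlead
  have hkey : r ^ (L - 1) + S ≤ r ^ L := by
    have := (Finset.Icc 1 L).add_sum_sub_one_le_sum_mul (c := fun i => (c i : ℝ))
      (x := fun i => r ^ (L - i)) (fun i _ => by positivity) (fun i _ => one_le_pow₀ hr1) h1 hc1'
    rw [hroot]
    simp only [← Nat.cast_sum, hsum] at this
    push_cast at this
    linarith
  have hg : r0 ^ (L - 1) * (r0 - 1) ≤ r ^ (L - 1) * (r - 1) := by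
    rw [mul_sub_one, mul_sub_one, ← hpow_succ, ← hpow_succ]
    linarith
  refine not_lt.1 fun hlt => hg.not_gt ?_
  exact strictMonoOn_pow_mul_sub_one (L - 1) hr1 (hr1.trans hlt.le) hlt

theorem min_principal_root_fixed_sum (L S : ℕ) (hL : 1 ≤ L) (hS : 1 ≤ S) (c : ℕ → ℕ)
    (hc1 : 1 ≤ c 1) (hcL : 1 ≤ c L)
    (hsum : ∑ i ∈ Finset.Icc 1 L, c i = S + 1)
    (r r0 : ℝ) (hr : 0 < r)
    (hroot : r ^ L = ∑ i ∈ Finset.Icc 1 L, (c i : ℝ) * r ^ (L - i))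
    (hr0 : 0 < r0) (hroot0 : r0 ^ L = r0 ^ (L - 1) + S) :
    r0 ≤ r :=
  min_principal_root_fixed_sum_general L S c hc1 hsum r r0 hr hroot hroot0
end

section
/- Let λ_L denote the unique positive root of p_L(x) = x^L − x^{L-1} − ⌈L(L+1)/4⌉ − 1. Then λ_L → 1 as L → ∞. -/
theorem principal_roots_tendsto_one (lam : ℕ → ℝ)
    (h : ∀ L, 2 ≤ L → 0 < lam L ∧
      lam L ^ L = lam L ^ (L - 1) + ((L * (L + 1) + 3) / 4 : ℕ) + 1) :
    Filter.Tendsto lam Filter.atTop (nhds 1) := by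
  rw [Metric.tendsto_atTop]
  intro ε hε
  have hr : (1:ℝ) < 1 + ε := by linarith
  have hlim := tendsto_pow_const_div_const_pow_of_one_lt 2 hr
  have hev : ∀ᶠ L : ℕ in Filter.atTop,
      ((L:ℝ)) ^ 2 / (1 + ε) ^ L < ε / (2 * (1 + ε)) := by
    have := hlim.eventually (gt_mem_nhds (show (0:ℝ) < ε / (2 * (1 + ε)) by positivity))
    exact this
  obtain ⟨N, hN⟩ := Filter.eventually_atTop.mp hev
  refine ⟨max N 2, fun L hL => ?_⟩
  have hL2 : 2 ≤ L := le_trans (le_max_right N 2) hL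
  have hLN : N ≤ L := le_trans (le_max_left N 2) hL
  obtain ⟨hpos, heq⟩ := h L hL2
  set c : ℕ := (L * (L + 1) + 3) / 4 with hc
  -- product form
  have hLsucc : L = (L - 1) + 1 := (Nat.succ_pred_eq_of_pos (by omega)).symm
  have hprod : lam L ^ (L - 1) * (lam L - 1) = (c:ℝ) + 1 := by
    have : lam L ^ L = lam L ^ (L - 1) * lam L := by
      rw [← pow_succ]; congr 1
    rw [this] at heq
    ring_nf
    ring_nf at heq
    linarith
  have hcpos : (0:ℝ) < (c:ℝ) + 1 := by positivity
  have hpowpos : (0:ℝ) < lam L ^ (L - 1) := pow_pos hpos _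
  have hgt1 : 1 < lam L := by
    by_contra hle
    push_neg at hle
    have : lam L - 1 ≤ 0 := by linarith
    nlinarith [mul_nonpos_of_nonneg_of_nonpos (le_of_lt hpowpos) this]
  -- bound on c
  have hcle : (c:ℝ) + 1 ≤ 2 * (L:ℝ) ^ 2 := by
    have h1 : c ≤ L ^ 2 := by
      have : L * (L + 1) + 3 ≤ 4 * L ^ 2 := by nlinarith
      calc c ≤ 4 * L ^ 2 / 4 := Nat.div_le_div_right this
        _ = L ^ 2 := by omega
    have h2 : (1:ℝ) ≤ (L:ℝ) ^ 2 := by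
      have : (1:ℝ) ≤ (L:ℝ) := by exact_mod_cast Nat.one_le_of_lt hL2
      nlinarith
    have := (Nat.cast_le (α := ℝ)).mpr h1
    push_cast at this
    linarith
  -- key inequality from the limit
  have hkey : 2 * (L:ℝ) ^ 2 < ε * (1 + ε) ^ (L - 1) := by
    have hpL : (0:ℝ) < (1 + ε) ^ L := by positivity
    have h3 := hN L hLN
    rw [div_lt_div_iff₀ hpL (by positivity)] at h3
    have hpowL : (1 + ε) ^ L = (1 + ε) ^ (L - 1) * (1 + ε) := by
      rw [← pow_succ]; congr 1
    nlinarith [pow_pos (show (0:ℝ) < 1 + ε by linarith) (L - 1)]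
  -- suppose lam L ≥ 1 + ε : contradiction
  have hub : lam L < 1 + ε := by
    by_contra hge
    push_neg at hge
    have h4 : (1 + ε) ^ (L - 1) ≤ lam L ^ (L - 1) :=
      pow_le_pow_left₀ (by linarith) hge _
    have h5 : ε ≤ lam L - 1 := by linarith
    have h6 : ε * (1 + ε) ^ (L - 1) ≤ lam L ^ (L - 1) * (lam L - 1) := by
      have := mul_le_mul h4 h5 (le_of_lt hε) (le_of_lt hpowpos)
      linarith [this]
    rw [hprod] at h6
    linarith
  rw [Real.dist_eq, abs_of_pos (by linarith)]
  linarith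
end

section
/- Fix L > 2 and k > 0. Let q, r, s be the unique positive roots of x^L − x^{L-1} − k, x^L − x^{L-1} − (k+1), and x^L − x^{L-1} − (k+2) respectively (so 1 < q < r < s). Then r − q > s − r. -/
/-!
Write the polynomial as f(x) = x^{L-1} (x - 1). A positive root of f - c with c ≥ 0 lies in
[1, ∞), where f is monotone and strictly convex. Since f(r) is the average of f(q) and f(s),
strict convexity gives f((q + s)/2) < f(r), and monotonicity turns this into (q + s)/2 < r.
-/

open Set

theorem StrictConvexOn.sub_lt_sub_of_sub_eq_sub {𝕜 : Type*} [Field 𝕜] [LinearOrder 𝕜]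
    [IsStrictOrderedRing 𝕜] {s : Set 𝕜} {f : 𝕜 → 𝕜} (hf : StrictConvexOn 𝕜 s f)
    (hmono : MonotoneOn f s) {x y z : 𝕜} (hx : x ∈ s) (hy : y ∈ s) (hz : z ∈ s)
    (hxz : x ≠ z) (h : f y - f x = f z - f y) : z - y < y - x := by
  by_contra! hle
  have hhalf : (0 : 𝕜) < 1 / 2 := by norm_num
  have hmid : (1 / 2 : 𝕜) • x + (1 / 2 : 𝕜) • z ∈ s :=
    hf.1 hx hz hhalf.le hhalf.le (by norm_num)
  have hconv := hf.2 hx hz hxz hhalf hhalf (by norm_num)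
  have hfy := hmono hy hmid (by simp only [smul_eq_mul]; linarith)
  simp only [smul_eq_mul] at hconv hfy
  linarith

theorem strictConvexOn_pow_mul_sub_one {n : ℕ} (hn : n ≠ 0) :
    StrictConvexOn ℝ (Ici 1) fun x : ℝ ↦ x ^ n * (x - 1) := by
  have hderiv (x : ℝ) :
      HasDerivAt (fun x : ℝ ↦ x ^ n * (x - 1)) (n * x ^ (n - 1) * (x - 1) + x ^ n) x := by
    simpa using (hasDerivAt_pow n x).fun_mul ((hasDerivAt_id x).sub_const 1)
  refine StrictMonoOn.strictConvexOn_of_deriv (convex_Ici 1) (by fun_prop) ?_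
  rw [interior_Ici]
  intro x (hx : 1 < x) y (hy : 1 < y) hxy
  rw [(hderiv x).deriv, (hderiv y).deriv]
  have hpow : x ^ n < y ^ n := pow_lt_pow_left₀ hxy (by linarith) hn
  have hrest : n * x ^ (n - 1) * (x - 1) ≤ n * y ^ (n - 1) * (y - 1) := by
    gcongr
  exact add_lt_add_of_le_of_lt hrest hpow

theorem monotoneOn_pow_mul_sub_one (n : ℕ) :
    MonotoneOn (fun x : ℝ ↦ x ^ n * (x - 1)) (Ici 1) := by
  intro x (hx : 1 ≤ x) y (hy : 1 ≤ y) hxy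
  dsimp only
  gcongr

theorem one_le_of_pow_mul_sub_one_nonneg {x : ℝ} {n : ℕ} (hx : 0 < x)
    (h : 0 ≤ x ^ n * (x - 1)) : 1 ≤ x := by
  linarith [(mul_nonneg_iff_of_pos_left (pow_pos hx n)).mp h]

theorem root_gaps_strictly_decreasing_general (L k : ℕ) (hL : 2 < L)
    (q r s : ℝ) (hq : 0 < q) (hqroot : q ^ L = q ^ (L - 1) + k)
    (hr : 0 < r) (hrroot : r ^ L = r ^ (L - 1) + (k + 1))
    (hs : 0 < s) (hsroot : s ^ L = s ^ (L - 1) + (k + 2)) :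
    r - q > s - r := by
  obtain ⟨n, rfl⟩ : ∃ n, L = n + 1 := ⟨L - 1, by omega⟩
  simp only [Nat.add_sub_cancel, pow_succ] at hqroot hrroot hsroot
  have hfq : q ^ n * (q - 1) = k := by linarith
  have hfr : r ^ n * (r - 1) = k + 1 := by linarith
  have hfs : s ^ n * (s - 1) = k + 2 := by linarith
  have hk : (0 : ℝ) ≤ k := k.cast_nonneg
  have hq1 : q ∈ Ici 1 := one_le_of_pow_mul_sub_one_nonneg hq (by linarith)
  have hr1 : r ∈ Ici 1 := one_le_of_pow_mul_sub_one_nonneg hr (by linarith)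
  have hs1 : s ∈ Ici 1 := one_le_of_pow_mul_sub_one_nonneg hs (by linarith)
  have hqs : q ≠ s := by
    rintro rfl
    linarith
  exact (strictConvexOn_pow_mul_sub_one (by omega)).sub_lt_sub_of_sub_eq_sub
    (monotoneOn_pow_mul_sub_one n) hq1 hr1 hs1 hqs (by linarith)

theorem root_gaps_strictly_decreasing (L k : ℕ) (hL : 2 < L) (hk : 0 < k)
    (q r s : ℝ) (hq : 0 < q) (hqroot : q ^ L = q ^ (L - 1) + k)
    (hr : 0 < r) (hrroot : r ^ L = r ^ (L - 1) + (k + 1))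
    (hs : 0 < s) (hsroot : s ^ L = s ^ (L - 1) + (k + 2)) :
    r - q > s - r :=
  root_gaps_strictly_decreasing_general L k hL q r s hq hqroot hr hrroot hs hsroot
end
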